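/- arXiv:1412.2642 — 4 statements merged into one kernel-verified Lean document; each statement's English description precedes it below -/
import Mathlib

section
/- For every c in the open interval (-1,1) and every real number λ, one has P_c(λ) = (3/2)·(1-λ)² - c²·λ + G(c) ≥ 0; that is, the polynomial function λ ↦ P_c(λ) is nonnegative on all of ℝ. -/
/-!
Completing the square at `λ = 1 + c²/3` gives
`P_c(λ) = (3/2)(1 - λ + c²/3)² + (G(c) - c² - c⁴/6)`, so it suffices that
`G(c) ≥ c² + c⁴/6`, the first two terms of the Taylor series `G(c) = ∑ c^{2k} / (k(2k-1))`.
As both sides are even, take `c ≥ 0`; then the difference vanishes at `0` and its derivative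
`log(1+x) - log(1-x) - 2x - 2x³/3` is a tail of the series `∑ 2x^{2k+1}/(2k+1)`, hence nonnegative.
-/

open Real Set

noncomputable def G (c : ℝ) : ℝ := (1 + c) * log (1 + c) + (1 - c) * log (1 - c)

lemma G_zero : G 0 = 0 := by simp [G]

lemma G_neg (c : ℝ) : G (-c) = G c := by
  rw [G, G, sub_neg_eq_add, ← sub_eq_add_neg, add_comm]

lemma hasDerivAt_G {x : ℝ} (hx : |x| < 1) :
    HasDerivAt G (log (1 + x) - log (1 - x)) x := by
  obtain ⟨hx₁, hx₂⟩ := abs_lt.mp hx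
  have hplus := (hasDerivAt_mul_log (x := 1 + x) (by linarith)).comp x
    ((hasDerivAt_id x).const_add 1)
  have hminus := (hasDerivAt_mul_log (x := 1 - x) (by linarith)).comp x
    ((hasDerivAt_id x).const_sub 1)
  exact (hplus.add hminus).congr_deriv (by ring)

lemma two_mul_add_le_log_sub_log {x : ℝ} (hx₀ : 0 ≤ x) (hx₁ : x < 1) :
    2 * x + 2 / 3 * x ^ 3 ≤ log (1 + x) - log (1 - x) := by
  have hsum := hasSum_log_sub_log_of_abs_lt_one (abs_lt.mpr ⟨by linarith, hx₁⟩)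
  calc 2 * x + 2 / 3 * x ^ 3
        = ∑ k ∈ Finset.range 2, 2 * (1 / (2 * (k : ℝ) + 1)) * x ^ (2 * k + 1) := by
          norm_num [Finset.sum_range_succ]
    _ ≤ log (1 + x) - log (1 - x) := sum_le_hasSum _ (fun k _ => by positivity) hsum

lemma sq_add_pow_four_div_six_le_G {c : ℝ} (hc : |c| < 1) : c ^ 2 + c ^ 4 / 6 ≤ G c := by
  wlog hc₀ : 0 ≤ c generalizing c
  · simpa [G_neg, (by ring : (-c) ^ 4 = c ^ 4)] using this (c := -c) (by rwa [abs_neg]) (by linarith)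
  have habs : ∀ x ∈ Icc 0 c, |x| < 1 := fun x hx =>
    abs_lt.mpr ⟨by linarith [hx.1], by linarith [hx.2, (abs_lt.mp hc).2]⟩
  have hderiv : ∀ x ∈ Icc 0 c, HasDerivAt (fun x => G x - x ^ 2 - x ^ 4 / 6)
      (log (1 + x) - log (1 - x) - (2 * x + 2 / 3 * x ^ 3)) x := fun x hx => by
    refine (((hasDerivAt_G (habs x hx)).sub (hasDerivAt_pow 2 x)).sub
      ((hasDerivAt_pow 4 x).div_const 6)).congr_deriv ?_
    norm_num
    ring
  have hmono : MonotoneOn (fun x => G x - x ^ 2 - x ^ 4 / 6) (Icc 0 c) := by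
    refine monotoneOn_of_hasDerivWithinAt_nonneg (convex_Icc 0 c)
      (fun x hx => (hderiv x hx).continuousAt.continuousWithinAt)
      (fun x hx => (hderiv x (interior_subset hx)).hasDerivWithinAt) fun x hx => ?_
    rw [interior_Icc] at hx
    exact sub_nonneg.mpr (two_mul_add_le_log_sub_log hx.1.le (hx.2.trans (abs_lt.mp hc).2))
  have h := hmono (left_mem_Icc.mpr hc₀) (right_mem_Icc.mpr hc₀) hc₀
  dsimp only at h
  rw [G_zero] at h
  linarith

/-- For every `c ∈ (-1,1)` and every real `λ`,
`P_c(λ) = (3/2)(1-λ)² - c² λ + G(c) ≥ 0`, where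
`G(c) = (1+c)·ln(1+c) + (1-c)·ln(1-c)`. -/
theorem Pc_nonneg (c : ℝ) (hc : c ∈ Set.Ioo (-1 : ℝ) 1) (l : ℝ) :
    0 ≤ 3 / 2 * (1 - l) ^ 2 - c ^ 2 * l
        + ((1 + c) * Real.log (1 + c) + (1 - c) * Real.log (1 - c)) := by
  have hG := sq_add_pow_four_div_six_le_G (abs_lt.mpr hc)
  calc (0 : ℝ) ≤ 3 / 2 * (1 - l + c ^ 2 / 3) ^ 2 + (G c - (c ^ 2 + c ^ 4 / 6)) :=
        add_nonneg (by positivity) (sub_nonneg.mpr hG)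
    _ = 3 / 2 * (1 - l) ^ 2 - c ^ 2 * l
        + ((1 + c) * Real.log (1 + c) + (1 - c) * Real.log (1 - c)) := by
      rw [G]
      ring
end

section
/- For every c in the open interval (-1,1), the discriminant of the quadratic polynomial P_c(λ) = (3/2)·λ² - (3+c²)·λ + 3/2 + G(c) satisfies (c²+3)² - 9 - 6·G(c) = -12·∑_{k=2}^{∞} c^{2k+2}/((2k+1)(2k+2)), and in particular (c²+3)² - 9 - 6·G(c) ≤ 0. -/
/-!
Split `G(c) = log (1 - c²) + c (log (1 + c) - log (1 - c))` and expand both logarithms in power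
series: `G(c) = ∑_{k ≥ 0} c^{2k+2} / ((2k+1)(k+1))`. The terms `k = 0, 1` give `c² + c⁴/6`, which
cancel the polynomial part `(c²+3)² - 9 = 6c² + c⁴` of the discriminant, leaving `-12` times a
series of even powers of `c` with positive coefficients.
-/

namespace Real

theorem hasSum_neg_log_one_sub_sq_of_abs_lt_one {c : ℝ} (hc : |c| < 1) :
    HasSum (fun k : ℕ => c ^ (2 * k + 2) / (k + 1)) (-log (1 - c ^ 2)) := by
  have hc2 : |c ^ 2| < 1 := by rw [abs_pow]; exact pow_lt_one₀ (abs_nonneg c) hc two_ne_zero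
  convert hasSum_pow_div_log_of_abs_lt_one hc2 using 2 with k
  ring

theorem hasSum_one_add_mul_log_add_one_sub_mul_log_of_abs_lt_one {c : ℝ} (hc : |c| < 1) :
    HasSum (fun k : ℕ => c ^ (2 * k + 2) / ((2 * k + 1) * (k + 1)))
      ((1 + c) * log (1 + c) + (1 - c) * log (1 - c)) := by
  obtain ⟨hc₁, hc₂⟩ := abs_lt.mp hc
  have hlog : log (1 - c ^ 2) = log (1 + c) + log (1 - c) := by
    rw [← log_mul (by linarith) (by linarith)]; ring_nf
  have hsum := ((hasSum_log_sub_log_of_abs_lt_one hc).mul_left c).sub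
    (hasSum_neg_log_one_sub_sq_of_abs_lt_one hc)
  rw [show (1 + c) * log (1 + c) + (1 - c) * log (1 - c)
      = c * (log (1 + c) - log (1 - c)) - -log (1 - c ^ 2) by rw [hlog]; ring]
  refine hsum.congr_fun fun k => ?_
  field_simp
  ring

theorem hasSum_pow_add_six_div_of_abs_lt_one {c : ℝ} (hc : |c| < 1) :
    HasSum (fun k : ℕ => c ^ (2 * k + 6) / ((2 * (k : ℝ) + 5) * (2 * (k : ℝ) + 6)))
      (((1 + c) * log (1 + c) + (1 - c) * log (1 - c) - c ^ 2 - c ^ 4 / 6) / 2) := by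
  have htail := ((hasSum_nat_add_iff' 2).mpr
    (hasSum_one_add_mul_log_add_one_sub_mul_log_of_abs_lt_one hc)).div_const 2
  rw [Finset.sum_range_succ, Finset.sum_range_one] at htail
  norm_num at htail
  rw [sub_sub]
  refine htail.congr_fun fun k => ?_
  field_simp
  ring

end Real

/-- For every `c ∈ (-1,1)`, the discriminant of the quadratic `P_c` satisfies
`(c²+3)² - 9 - 6 G(c) = -12 ∑_{k=2}^∞ c^{2k+2}/((2k+1)(2k+2))`, and in particular
it is `≤ 0`, where `G(c) = (1+c)·ln(1+c) + (1-c)·ln(1-c)`. -/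
theorem discriminant_Pc (c : ℝ) (hc : c ∈ Set.Ioo (-1 : ℝ) 1) :
    (c ^ 2 + 3) ^ 2 - 9
        - 6 * ((1 + c) * Real.log (1 + c) + (1 - c) * Real.log (1 - c))
      = -12 * ∑' k : ℕ, c ^ (2 * k + 6) / ((2 * (k : ℝ) + 5) * (2 * (k : ℝ) + 6)) ∧
    (c ^ 2 + 3) ^ 2 - 9
        - 6 * ((1 + c) * Real.log (1 + c) + (1 - c) * Real.log (1 - c)) ≤ 0 := by
  have hsum := Real.hasSum_pow_add_six_div_of_abs_lt_one (abs_lt.mpr hc)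
  have heq : (c ^ 2 + 3) ^ 2 - 9
        - 6 * ((1 + c) * Real.log (1 + c) + (1 - c) * Real.log (1 - c))
      = -12 * ∑' k : ℕ, c ^ (2 * k + 6) / ((2 * (k : ℝ) + 5) * (2 * (k : ℝ) + 6)) := by
    rw [hsum.tsum_eq]; ring
  have hnonneg : 0 ≤ ∑' k : ℕ, c ^ (2 * k + 6) / ((2 * (k : ℝ) + 5) * (2 * (k : ℝ) + 6)) :=
    tsum_nonneg fun k => div_nonneg (Even.pow_nonneg ⟨k + 3, by ring⟩ c) (by positivity)
  exact ⟨heq, by rw [heq]; linarith⟩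
end

section
/- For every c in the open interval (-1,1), setting λ* = c²/3 + 1, one has P_c(λ*) = 2·∑_{k=2}^{∞} c^{2k+2}/((2k+1)(2k+2)) ≥ 0, and P_c(λ) ≥ P_c(λ*) for every real λ; that is, the minimum of P_c over ℝ is attained at λ* and is nonnegative. -/
/-!
Subtracting the series of `log (1 - c²)` from `c` times that of `log ((1 + c) / (1 - c))` gives
`G(c) = ∑_{k ≥ 0} 2 c^{2k+2} / ((2k+1)(2k+2))`, a series of nonnegative terms whose first two
terms are `c² + c⁴/6`. Completing the square, `P_c(λ) = (3/2)(λ - λ*)² + G(c) - c² - c⁴/6`, so the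
minimum of `P_c` is attained at `λ*` and equals the tail of that series from `k = 2` on.
-/

open Real Finset

theorem hasSum_one_add_mul_log_add_one_sub_mul_log {c : ℝ} (hc : |c| < 1) :
    HasSum (fun k : ℕ => 2 * c ^ (2 * k + 2) / ((2 * k + 1) * (2 * k + 2)))
      ((1 + c) * log (1 + c) + (1 - c) * log (1 - c)) := by
  obtain ⟨hc₁, hc₂⟩ := abs_lt.1 hc
  have hc_sq : |c ^ 2| < 1 := by rwa [abs_pow, sq_lt_one_iff_abs_lt_one, abs_abs]
  have hodd := (hasSum_log_sub_log_of_abs_lt_one hc).mul_left c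
  have heven := (hasSum_pow_div_log_of_abs_lt_one hc_sq).neg
  have hG : (1 + c) * log (1 + c) + (1 - c) * log (1 - c)
      = c * (log (1 + c) - log (1 - c)) + -(-log (1 - c ^ 2)) := by
    rw [neg_neg, show 1 - c ^ 2 = (1 + c) * (1 - c) by ring,
      log_mul (by linarith) (by linarith)]
    ring
  rw [hG]
  refine (hodd.add heven).congr_fun fun k => ?_
  rw [← pow_mul]
  field_simp
  ring

theorem hasSum_tail_one_add_mul_log_add_one_sub_mul_log {c : ℝ} (hc : |c| < 1) :
    HasSum (fun k : ℕ => c ^ (2 * k + 6) / ((2 * k + 5) * (2 * k + 6)))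
      (((1 + c) * log (1 + c) + (1 - c) * log (1 - c) - c ^ 2 - c ^ 4 / 6) / 2) := by
  have htail := (hasSum_nat_add_iff' 2).2 (hasSum_one_add_mul_log_add_one_sub_mul_log hc)
  have hhead : ∑ k ∈ range 2, 2 * c ^ (2 * k + 2) / ((2 * (k : ℝ) + 1) * (2 * k + 2))
      = c ^ 2 + c ^ 4 / 6 := by
    norm_num [sum_range_succ]
    ring
  rw [sub_sub, ← hhead]
  refine (htail.div_const 2).congr_fun fun k => ?_
  push_cast
  ring_nf

/-- For every `c ∈ (-1,1)`, setting `λ* = c²/3 + 1`, one has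
`P_c(λ*) = 2 ∑_{k=2}^∞ c^{2k+2}/((2k+1)(2k+2)) ≥ 0` and `P_c(λ) ≥ P_c(λ*)` for all real `λ`,
where `P_c(λ) = (3/2)(1-λ)² - c² λ + G(c)` and `G(c) = (1+c)·ln(1+c) + (1-c)·ln(1-c)`. -/
theorem Pc_min_at_lambda_star (c : ℝ) (hc : c ∈ Set.Ioo (-1 : ℝ) 1) :
    (3 / 2 * (1 - (c ^ 2 / 3 + 1)) ^ 2 - c ^ 2 * (c ^ 2 / 3 + 1)
          + ((1 + c) * Real.log (1 + c) + (1 - c) * Real.log (1 - c))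
        = 2 * ∑' k : ℕ, c ^ (2 * k + 6) / ((2 * (k : ℝ) + 5) * (2 * (k : ℝ) + 6))) ∧
    (0 ≤ 3 / 2 * (1 - (c ^ 2 / 3 + 1)) ^ 2 - c ^ 2 * (c ^ 2 / 3 + 1)
          + ((1 + c) * Real.log (1 + c) + (1 - c) * Real.log (1 - c))) ∧
    (∀ l : ℝ,
      3 / 2 * (1 - (c ^ 2 / 3 + 1)) ^ 2 - c ^ 2 * (c ^ 2 / 3 + 1)
          + ((1 + c) * Real.log (1 + c) + (1 - c) * Real.log (1 - c))
        ≤ 3 / 2 * (1 - l) ^ 2 - c ^ 2 * l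
          + ((1 + c) * Real.log (1 + c) + (1 - c) * Real.log (1 - c))) := by
  have htail := hasSum_tail_one_add_mul_log_add_one_sub_mul_log (abs_lt.2 hc)
  have hvalue : 3 / 2 * (1 - (c ^ 2 / 3 + 1)) ^ 2 - c ^ 2 * (c ^ 2 / 3 + 1)
        + ((1 + c) * log (1 + c) + (1 - c) * log (1 - c))
      = 2 * ∑' k : ℕ, c ^ (2 * k + 6) / ((2 * (k : ℝ) + 5) * (2 * (k : ℝ) + 6)) := by
    rw [htail.tsum_eq]
    ring
  have hterm_nonneg (k : ℕ) : 0 ≤ c ^ (2 * k + 6) / ((2 * (k : ℝ) + 5) * (2 * (k : ℝ) + 6)) := by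
    rw [show 2 * k + 6 = 2 * (k + 3) by ring, pow_mul]
    positivity
  refine ⟨hvalue, ?_, fun l => ?_⟩
  · rw [hvalue]
    exact mul_nonneg zero_le_two (tsum_nonneg hterm_nonneg)
  · nlinarith [sq_nonneg (l - (c ^ 2 / 3 + 1))]
end

section
/- For every c in the open interval (-1,1), one has (1+c)·ln(1+c) + (1-c)·ln(1-c) ≥ c² + c⁴/6. -/
/-!
Writing `G(c) = log (1 - c²) + c · (log (1 + c) - log (1 - c))` and expanding both logarithmic
terms in their Taylor series gives `G(c) = ∑_{k ≥ 0} c^(2k+2) / ((2k+1)(k+1))`, a series of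
nonnegative terms whose first two are `c²` and `c⁴/6`.
-/

open Real Finset

theorem Real.hasSum_mul_log_add_mul_log {c : ℝ} (hc : |c| < 1) :
    HasSum (fun k : ℕ => c ^ (2 * k + 2) / ((2 * k + 1) * (k + 1)))
      ((1 + c) * log (1 + c) + (1 - c) * log (1 - c)) := by
  have hsq : |c ^ 2| < 1 := by
    rw [abs_pow, sq_lt_one_iff₀ (abs_nonneg c)]
    exact hc
  have hsum := ((hasSum_log_sub_log_of_abs_lt_one hc).mul_left c).sub
    (hasSum_pow_div_log_of_abs_lt_one hsq)
  have hlog_sq : log (1 - c ^ 2) = log (1 + c) + log (1 - c) := by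
    obtain ⟨hl, hr⟩ := abs_lt.mp hc
    rw [← log_mul (by linarith) (by linarith)]
    ring_nf
  have hG : (1 + c) * log (1 + c) + (1 - c) * log (1 - c)
      = c * (log (1 + c) - log (1 - c)) - -log (1 - c ^ 2) := by
    rw [hlog_sq]
    ring
  rw [hG]
  refine hsum.congr_fun fun k => ?_
  field_simp
  ring

/-- For every `c ∈ (-1,1)`, `(1+c)·ln(1+c) + (1-c)·ln(1-c) ≥ c² + c⁴/6`. -/
theorem G_lower_bound (c : ℝ) (hc : c ∈ Set.Ioo (-1 : ℝ) 1) :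
    c ^ 2 + c ^ 4 / 6 ≤ (1 + c) * Real.log (1 + c) + (1 - c) * Real.log (1 - c) := by
  have hsum := Real.hasSum_mul_log_add_mul_log (abs_lt.mpr hc)
  have hterm_nonneg (k : ℕ) : 0 ≤ c ^ (2 * k + 2) / ((2 * k + 1) * (k + 1)) := by
    rw [show 2 * k + 2 = 2 * (k + 1) by ring, pow_mul]
    positivity
  calc c ^ 2 + c ^ 4 / 6
      = ∑ k ∈ range 2, c ^ (2 * k + 2) / ((2 * k + 1) * (k + 1)) := by
        norm_num [sum_range_succ]
    _ ≤ _ := sum_le_hasSum _ (fun k _ => hterm_nonneg k) hsum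
end
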